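/- In the simplicial chain complex of X_{s,a} with a dividing s, for each 0 ≤ i ≤ a−2 the chain ι_{2d+1,i} = x^i x_0 x^{a−i−2} ⊗ x ⊗ x^{a−1} ⊗ x ⊗ ... ⊗ x^{a−1} ⊗ x (in degree 2d+1, with d = ⌊(s−1)/a⌋ = s/a − 1) is a cycle. -/
import Mathlib


/-- A (possibly invalid) degree-`e` generator symbol
`x^{k₀'} x₀ x^{k₀''} ⊗ x^{k₁} ⊗ … ⊗ x^{k_e}` of the simplicial chain complex of
`X_{s,a}`: the first component is `k₀'`, and the function records
`k₀'' = g.2 0` and `k_i = g.2 i` for `1 ≤ i ≤ e`. -/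
abbrev Gen (e : ℕ) := ℕ × (Fin (e + 1) → ℕ)

/-- Degree-`e` chains: formal `ℤ`-linear combinations of generator symbols. -/
abbrev Chain (e : ℕ) := Gen e →₀ ℤ

/-- The symbol is a nondegenerate simplex of `X_{s,a}` distinct from the
basepoint: `k₀' + 1 + k₀'' < a`, `1 ≤ k_i < a` for `1 ≤ i ≤ e`, and
`k₀' + k₀'' + k₁ + … + k_e = s - 1`. -/
def ValidGen (s a e : ℕ) (g : Gen e) : Prop :=
  g.1 + 1 + g.2 0 < a ∧ (∀ i : Fin (e + 1), i ≠ 0 → 1 ≤ g.2 i ∧ g.2 i < a) ∧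
    g.1 + ∑ i, g.2 i = s - 1

/-- The `j`-th face of a degree-`(e+1)` generator: the Hochschild-type face map
multiplying adjacent tensor factors (`d_0` multiplies the first `x`-factor into
the `x₀`-slot on the right, the last face multiplies the last factor into the
`x₀`-slot on the left cyclically, and middle faces merge adjacent factors). -/
def face (e : ℕ) (j : Fin (e + 2)) (g : Gen (e + 1)) : Gen e :=
  if j = 0 then
    (g.1, fun i => if i = 0 then g.2 0 + g.2 1 else g.2 i.succ)
  else if j = Fin.last (e + 1) then
    (g.1 + g.2 (Fin.last (e + 1)), fun i => g.2 i.castSucc)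
  else
    (g.1, fun i => if (i : ℕ) < (j : ℕ) then g.2 i.castSucc
      else if (i : ℕ) = (j : ℕ) then g.2 i.castSucc + g.2 i.succ
      else g.2 i.succ)

open Classical in
/-- The boundary of a generator: the alternating sum of its faces, where a face
that hits the basepoint of `X_{s,a}` (i.e. fails to be a valid generator, its
merged factor having length `≥ a`) counts as zero. -/
noncomputable def bdGen (s a e : ℕ) (g : Gen (e + 1)) : Chain e :=
  ∑ j : Fin (e + 2), ((-1 : ℤ) ^ (j : ℕ)) •
    (if ValidGen s a e (face e j g) then Finsupp.single (face e j g) 1 else 0)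

/-- The simplicial boundary map of `C_*(X_{s,a})`, extended linearly; the
boundary of a degree-`0` chain is zero. -/
noncomputable def Bd (s a : ℕ) : (e : ℕ) → Chain e → Chain (e - 1)
  | 0 => fun _ => 0
  | (e + 1) => fun c => c.sum fun g z => z • bdGen s a e g

/-- The generator `ι_{2d+1,i} = x^i x₀ x^{a−i−2} ⊗ x ⊗ x^{a−1} ⊗ x ⊗ … ⊗
x^{a−1} ⊗ x` in degree `2d+1`: `k₀' = i`, `k₀'' = a−i−2`, the odd slots
`1, 3, …, 2d+1` carry `1` and the even slots `2, 4, …, 2d` carry `a−1`. -/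
noncomputable def iotaOdd (s a d i : ℕ) : Chain (2 * d + 1) :=
  Finsupp.single
    ((i, fun j : Fin (2 * d + 2) =>
      if j = 0 then a - i - 2 else if Odd (j : ℕ) then 1 else a - 1) :
      Gen (2 * d + 1)) 1

/-- if `a ∣ s` (with `a ≥ 2`) and `d = ⌊(s−1)/a⌋ = s/a − 1`, then
for each `0 ≤ i ≤ a−2` the chain `ι_{2d+1,i}` is a cycle: its simplicial
boundary vanishes. -/

theorem stmt13 (s a : ℕ) (ha : 2 ≤ a) (hs : 0 < s) (hdvd : a ∣ s) (d : ℕ)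
    (hd : d = s / a - 1) (i : ℕ) (hi : i ≤ a - 2) :
    Bd s a (2 * d + 1) (iotaOdd s a d i) = 0 := by
  set g : Gen (2 * d + 1) := ((i, fun j : Fin (2 * d + 2) =>
      if j = 0 then a - i - 2 else if Odd (j : ℕ) then 1 else a - 1) :
      Gen (2 * d + 1)) with hg
  have key : ∀ j : Fin (2 * d + 2), ¬ ValidGen s a (2 * d) (face (2 * d) j g) := by
    intro j hval
    obtain ⟨h1, h2, h3⟩ := hval
    rcases eq_or_ne j 0 with hj0 | hj0
    · subst hj0
      simp only [face, if_pos rfl, hg] at h1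
      have e0 : ((0 : Fin (2 * d + 2)) : ℕ) = 0 := rfl
      have e1 : ((1 : Fin (2 * d + 2)) : ℕ) = 1 := by
        simp [Fin.val_one]
      simp only [Fin.ext_iff, e0, e1] at h1
      norm_num at h1
      omega
    rcases eq_or_ne j (Fin.last (2 * d + 1)) with hjl | hjl
    · subst hjl
      have hne : ¬ (Fin.last (2 * d + 1) = (0 : Fin (2 * d + 2))) := by
        simp [Fin.ext_iff]
      have hodd : Odd ((Fin.last (2 * d + 1) : Fin (2 * d + 2)) : ℕ) := ⟨d, rfl⟩
      have hA : (face (2 * d) (Fin.last (2 * d + 1)) g).1 = i + 1 := by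
        rw [face, if_neg hne, if_pos rfl]
        show i + (if Fin.last (2 * d + 1) = 0 then a - i - 2
          else if Odd ((Fin.last (2 * d + 1) : Fin (2 * d + 2)) : ℕ) then 1 else a - 1) = i + 1
        rw [if_neg hne, if_pos hodd]
      have hB : (face (2 * d) (Fin.last (2 * d + 1)) g).2 0 = a - i - 2 := by
        rw [face, if_neg hne, if_pos rfl]
        show (if ((0 : Fin (2 * d + 1)).castSucc : Fin (2 * d + 2)) = 0 then a - i - 2
          else if Odd (((0 : Fin (2 * d + 1)).castSucc : Fin (2 * d + 2)) : ℕ) then 1 else a - 1)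
          = a - i - 2
        rw [if_pos (by simp [Fin.ext_iff])]
      rw [hA, hB] at h1
      omega
    · -- middle face
      have hj1 : 1 ≤ (j : ℕ) := by
        rcases Nat.eq_zero_or_pos (j : ℕ) with h | h
        · exact absurd (Fin.ext h) hj0
        · exact h
      have hj2 : (j : ℕ) ≤ 2 * d := by
        have := j.isLt
        rcases Nat.lt_or_ge (j : ℕ) (2 * d + 1) with h | h
        · omega
        · exact absurd (Fin.ext (by omega : (j : ℕ) = 2 * d + 1)) hjl
      set k : Fin (2 * d + 1) := ⟨(j : ℕ), by omega⟩ with hk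
      have hkv : (k : ℕ) = (j : ℕ) := rfl
      have hkne : k ≠ 0 := by
        intro h
        have h' : (k : ℕ) = ((0 : Fin (2 * d + 1)) : ℕ) := congrArg Fin.val h
        rw [hkv, Fin.val_zero] at h'
        omega
      have hc : ((k.castSucc : Fin (2 * d + 2)) : ℕ) = (j : ℕ) := rfl
      have hsu : ((k.succ : Fin (2 * d + 2)) : ℕ) = (j : ℕ) + 1 := rfl
      have hcne : k.castSucc ≠ (0 : Fin (2 * d + 2)) := by
        intro h
        have h' : ((k.castSucc : Fin (2 * d + 2)) : ℕ) = ((0 : Fin (2 * d + 2)) : ℕ) :=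
          congrArg Fin.val h
        rw [hc, Fin.val_zero] at h'
        omega
      have hsne : k.succ ≠ (0 : Fin (2 * d + 2)) := by
        intro h
        have h' : ((k.succ : Fin (2 * d + 2)) : ℕ) = ((0 : Fin (2 * d + 2)) : ℕ) :=
          congrArg Fin.val h
        rw [hsu, Fin.val_zero] at h'
        omega
      have hface : (face (2 * d) j g).2 k = g.2 k.castSucc + g.2 k.succ := by
        rw [face, if_neg hj0, if_neg hjl]
        show (if (k : ℕ) < (j : ℕ) then g.2 k.castSucc
          else if (k : ℕ) = (j : ℕ) then g.2 k.castSucc + g.2 k.succ else g.2 k.succ)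
          = g.2 k.castSucc + g.2 k.succ
        rw [if_neg (by omega : ¬ ((k : ℕ) < (j : ℕ))), if_pos hkv]
      have hgc : g.2 k.castSucc = (if Odd ((j : ℕ)) then 1 else a - 1) := by
        show (if (k.castSucc : Fin (2 * d + 2)) = 0 then a - i - 2
          else if Odd ((k.castSucc : Fin (2 * d + 2)) : ℕ) then 1 else a - 1)
          = (if Odd ((j : ℕ)) then 1 else a - 1)
        rw [if_neg hcne, hc]
      have hgs : g.2 k.succ = (if Odd ((j : ℕ) + 1) then 1 else a - 1) := by
        show (if (k.succ : Fin (2 * d + 2)) = 0 then a - i - 2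
          else if Odd ((k.succ : Fin (2 * d + 2)) : ℕ) then 1 else a - 1)
          = (if Odd ((j : ℕ) + 1) then 1 else a - 1)
        rw [if_neg hsne, hsu]
      have h2k := (h2 k hkne).2
      rw [hface, hgc, hgs] at h2k
      rcases Nat.even_or_odd (j : ℕ) with he | ho
      · rw [if_neg (Nat.not_odd_iff_even.mpr he), if_pos (Even.add_one he)] at h2k
        omega
      · rw [if_pos ho, if_neg (Nat.not_odd_iff_even.mpr
          (Nat.even_add_one.mpr (Nat.not_even_iff_odd.mpr ho)))] at h2k
        omega
  have hbd : bdGen s a (2 * d) g = 0 := by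
    unfold bdGen
    refine Finset.sum_eq_zero fun j _ => ?_
    rw [if_neg (key j), smul_zero]
  show Bd s a (2 * d + 1) (Finsupp.single g 1) = 0
  have : Bd s a (2 * d + 1) (Finsupp.single g 1) =
      (Finsupp.single g (1 : ℤ)).sum fun g z => z • bdGen s a (2 * d) g := rfl
  rw [this, Finsupp.sum_single_index (by simp), one_smul, hbd]
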